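/- arXiv:2105.01625 — 7 statements merged into one kernel-verified Lean document; each statement's English description precedes it below -/
import Mathlib

section
/- Let ε ∈ ℝ, let n ∈ ℕ, and let β : ℝⁿ → ℝⁿ be a differentiable map such that g ↦ β(g) + ε·g is homogeneous of degree 3, i.e. β(t·g) + ε·(t·g) = t³·(β(g) + ε·g) for all t ∈ ℝ and g ∈ ℝⁿ. If g* ∈ ℝⁿ satisfies β(g*) = 0, then the Jacobian matrix Dβ(g*) satisfies Dβ(g*)·g* = 2ε·g*. In particular, if g* ≠ 0, then 2ε is an eigenvalue of Dβ(g*) with eigenvector g*. -/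
/-!
Euler's identity for a map `h` homogeneous of degree `k` along the ray through `x` reads
`Dh(x) x = k • h x`: differentiate `t ↦ h (t • x) = t ^ k • h x` at `t = 1`. Applied to
`h = β + ε • id` with `k = 3` at a zero `g*` of `β`, it gives
`Dβ(g*) g* + ε • g* = 3ε • g*`.
-/

section Euler

variable {𝕜 E F : Type*} [NontriviallyNormedField 𝕜]
  [NormedAddCommGroup E] [NormedSpace 𝕜 E] [NormedAddCommGroup F] [NormedSpace 𝕜 F]

theorem HasFDerivAt.apply_self_eq_nsmul_of_homogeneous {h : E → F} {h' : E →L[𝕜] F} {x : E}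
    {k : ℕ} (hh : HasFDerivAt h h' x) (hhom : ∀ t : 𝕜, h (t • x) = t ^ k • h x) :
    h' x = k • h x := by
  have hray : HasDerivAt (fun t : 𝕜 => h (t • x)) (h' x) 1 := by
    have hline : HasDerivAt (fun t : 𝕜 => t • x) x 1 := by
      simpa using (hasDerivAt_id (1 : 𝕜)).smul_const x
    exact (one_smul 𝕜 x ▸ hh).comp_hasDerivAt 1 hline
  have hpow : HasDerivAt (fun t : 𝕜 => t ^ k • h x) (k • h x) 1 := by
    simpa [Nat.cast_smul_eq_nsmul] using (hasDerivAt_pow k (1 : 𝕜)).smul_const (h x)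
  exact hray.unique (funext hhom ▸ hpow)

theorem HasFDerivAt.apply_self_eq_smul_of_homogeneous_add_smul {β : E → E}
    {β' : E →L[𝕜] E} {x : E} {k : ℕ} {ε : 𝕜} (hβ : HasFDerivAt β β' x)
    (hhom : ∀ t : 𝕜, β (t • x) + ε • (t • x) = t ^ k • (β x + ε • x))
    (hx : β x = 0) : β' x = ((k - 1) * ε) • x := by
  have hEuler :=
    (hβ.add ((hasFDerivAt_id x).const_smul ε)).apply_self_eq_nsmul_of_homogeneous hhom
  simp only [add_apply, smul_apply, ContinuousLinearMap.id_apply, Pi.add_apply,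
    Pi.smul_apply, id_eq, hx, zero_add] at hEuler
  rw [sub_mul, one_mul, sub_smul, eq_sub_iff_add_eq, hEuler, mul_smul, Nat.cast_smul_eq_nsmul]

end Euler

/-- If `β : ℝⁿ → ℝⁿ` is differentiable and `g ↦ β g + ε • g` is homogeneous of
degree 3, then at any zero `g*` of `β` the Jacobian satisfies
`Dβ(g*) g* = 2ε • g*`; in particular if `g* ≠ 0` then `2ε` is an eigenvalue of
`Dβ(g*)` with eigenvector `g*`. -/
theorem stmt0 (ε : ℝ) (n : ℕ) (β : (Fin n → ℝ) → (Fin n → ℝ))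
    (hdiff : Differentiable ℝ β)
    (hhom : ∀ (t : ℝ) (g : Fin n → ℝ),
      β (t • g) + ε • (t • g) = t ^ 3 • (β g + ε • g))
    (gstar : Fin n → ℝ) (hfix : β gstar = 0) :
    fderiv ℝ β gstar gstar = (2 * ε) • gstar ∧
      (gstar ≠ 0 →
        Module.End.HasEigenvector
          (↑(fderiv ℝ β gstar) : (Fin n → ℝ) →ₗ[ℝ] (Fin n → ℝ))
          (2 * ε) gstar) := by
  have hmain := (hdiff gstar).hasFDerivAt.apply_self_eq_smul_of_homogeneous_add_smul (k := 3)
    (fun t => hhom t gstar) hfix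
  norm_num at hmain
  exact ⟨hmain, fun hne => ⟨Module.End.mem_eigenspace_iff.mpr hmain, hne⟩⟩
end

section
/- (Hopf condition) Let M be a real 4×4 matrix whose characteristic polynomial is λ⁴ + Aλ³ + Bλ² + Cλ + D, and suppose its complex eigenvalues, counted with algebraic multiplicity, are 2, λ₂, λ₃, λ₄. If λ₃ = iχ and λ₄ = −iχ for some real number χ, then C = A(B + 4 + 2A). -/
open Polynomial

/-- Hopf condition: if a real 4×4 matrix `M` has characteristic polynomial
`λ⁴ + Aλ³ + Bλ² + Cλ + D` whose complex eigenvalues (with algebraic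
multiplicity) are `2, λ₂, λ₃, λ₄`, and `λ₃ = iχ`, `λ₄ = −iχ` for some real
`χ`, then `C = A(B + 4 + 2A)`. -/
theorem stmt4 (M : Matrix (Fin 4) (Fin 4) ℝ) (A B C D : ℝ) (l₂ l₃ l₄ : ℂ)
    (hchar : ∀ z : ℂ, (M.charpoly.map (algebraMap ℝ ℂ)).eval z =
      z ^ 4 + (A : ℂ) * z ^ 3 + (B : ℂ) * z ^ 2 + (C : ℂ) * z + (D : ℂ))
    (hfac : ∀ z : ℂ, z ^ 4 + (A : ℂ) * z ^ 3 + (B : ℂ) * z ^ 2 + (C : ℂ) * z + (D : ℂ)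
      = (z - 2) * (z - l₂) * (z - l₃) * (z - l₄))
    (χ : ℝ) (h3 : l₃ = Complex.I * (χ : ℂ)) (h4 : l₄ = -(Complex.I * (χ : ℂ))) :
    C = A * (B + 4 + 2 * A) := by
  subst h3 h4
  have h0 := hfac 0
  have h1 := hfac 1
  have hm1 := hfac (-1)
  have h2 := hfac 2
  have hI : Complex.I ^ 2 = -1 := Complex.I_sq
  have eqA : (A : ℂ) + 2 + l₂ = 0 := by
    linear_combination (1/6 : ℂ) * h2 - (1/2 : ℂ) * h1 - (1/6 : ℂ) * hm1 +
      (1/2 : ℂ) * h0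
  have eqB : (B : ℂ) - 2 * l₂ - (χ : ℂ)^2 = 0 := by
    linear_combination (1/2 : ℂ) * h1 + (1/2 : ℂ) * hm1 - h0 - ((χ : ℂ)^2) * hI
  have eqC : (C : ℂ) + (2 + l₂) * (χ : ℂ)^2 = 0 := by
    linear_combination h1 - (1/3 : ℂ) * hm1 - (1/6 : ℂ) * h2 - (1/2 : ℂ) * h0 +
      ((l₂ + 2) * (χ : ℂ)^2) * hI
  have key : (C : ℂ) = (A : ℂ) * ((B : ℂ) + 4 + 2 * (A : ℂ)) := by
    linear_combination eqC - (A : ℂ) * eqB - (2 * (A : ℂ) + (χ : ℂ)^2) * eqA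
  exact_mod_cast key
end

section
/- Let n ∈ ℕ, let G be a constant real symmetric positive definite n×n matrix, let F : ℝⁿ → ℝ be continuously differentiable, and let x : ℝ → ℝⁿ be differentiable with x'(t) = G·∇F(x(t)) for all t. If x is periodic, i.e. x(t + T) = x(t) for all t and some T > 0, then x is constant. In particular, the gradient flow admits no nonconstant periodic orbits (no RG limit cycles). -/
/-! Along a solution of `x' = A ∇F(x)` with `A` positive definite, the energy `F ∘ x` has
derivative `⟪∇F(x), A ∇F(x)⟫ ≥ 0`, so it is monotone. A monotone periodic function is constant,
so this derivative vanishes identically; positive definiteness then forces `∇F(x t) = 0`, hence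
`x' = 0` and `x` is constant. -/

open scoped InnerProductSpace Gradient

theorem Monotone.eq_of_periodic {α β : Type*} [AddCommGroup α] [LinearOrder α]
    [IsOrderedAddMonoid α] [Archimedean α] [PartialOrder β] {g : α → β} {T : α}
    (hmono : Monotone g) (hper : Function.Periodic g T) (hT : 0 < T) (s t : α) : g s = g t := by
  wlog hst : s ≤ t generalizing s t
  · exact (this t s (le_of_not_ge hst)).symm
  obtain ⟨m, hm⟩ := Archimedean.arch (t - s) hT
  refine le_antisymm (hmono hst) ?_
  calc g t ≤ g (s + m • T) := hmono (sub_le_iff_le_add'.mp hm)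
    _ = g s := hper.nsmul m s

theorem Matrix.PosDef.inner_toEuclideanLin_pos {ι : Type*} [Fintype ι] [DecidableEq ι]
    {G : Matrix ι ι ℝ} (hG : G.PosDef) {v : EuclideanSpace ℝ ι} (hv : v ≠ 0) :
    0 < ⟪v, G.toEuclideanLin v⟫_ℝ := by
  rw [EuclideanSpace.inner_eq_star_dotProduct, Matrix.ofLp_toLpLin,
    Matrix.toLin'_apply, dotProduct_comm]
  exact hG.dotProduct_mulVec_pos (by simpa using hv)

section GradientFlow

variable {E : Type*} [NormedAddCommGroup E] [InnerProductSpace ℝ E] [CompleteSpace E]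
  {A : E →ₗ[ℝ] E} {F : E → ℝ} {x : ℝ → E}

theorem hasDerivAt_comp_of_gradient_flow (hF : Differentiable ℝ F) (hx : Differentiable ℝ x)
    (hflow : ∀ t, deriv x t = A (∇ F (x t))) (t : ℝ) :
    HasDerivAt (F ∘ x) ⟪∇ F (x t), A (∇ F (x t))⟫_ℝ t := by
  rw [← hflow t]
  exact (hF (x t)).hasGradientAt.hasFDerivAt.comp_hasDerivAt t (hx t).hasDerivAt

theorem Function.Periodic.eq_of_gradient_flow (hA : ∀ v, v ≠ 0 → 0 < ⟪v, A v⟫_ℝ)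
    (hF : Differentiable ℝ F) (hx : Differentiable ℝ x)
    (hflow : ∀ t, deriv x t = A (∇ F (x t))) {T : ℝ} (hper : Function.Periodic x T)
    (hT : 0 < T) (t₁ t₂ : ℝ) : x t₁ = x t₂ := by
  have hA_nonneg (v : E) : 0 ≤ ⟪v, A v⟫_ℝ := by
    rcases eq_or_ne v 0 with rfl | hv
    · simp
    · exact (hA v hv).le
  have henergy := hasDerivAt_comp_of_gradient_flow hF hx hflow
  have hmono : Monotone (F ∘ x) :=
    monotone_of_deriv_nonneg (fun t => (henergy t).differentiableAt)
      (fun t => (henergy t).deriv ▸ hA_nonneg _)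
  have hconst : F ∘ x = fun _ => (F ∘ x) 0 :=
    funext fun t => hmono.eq_of_periodic (hper.comp F) hT t 0
  have hgrad (t : ℝ) : ∇ F (x t) = 0 := by
    by_contra hv
    have hzero : HasDerivAt (F ∘ x) 0 t := hconst ▸ hasDerivAt_const t _
    exact (hA _ hv).ne' ((henergy t).unique hzero)
  exact is_const_of_deriv_eq_zero hx (fun t => by rw [hflow, hgrad, map_zero]) t₁ t₂

end GradientFlow

theorem stmt8_general (n : ℕ) (G : Matrix (Fin n) (Fin n) ℝ)
    (hGpd : G.PosDef)
    (F : EuclideanSpace ℝ (Fin n) → ℝ) (hF : ContDiff ℝ 1 F)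
    (x : ℝ → EuclideanSpace ℝ (Fin n)) (hx : Differentiable ℝ x)
    (hflow : ∀ t : ℝ, deriv x t = Matrix.toEuclideanLin G (gradient F (x t)))
    (T : ℝ) (hT : 0 < T) (hper : ∀ t : ℝ, x (t + T) = x t) :
    ∀ t₁ t₂ : ℝ, x t₁ = x t₂ :=
  Function.Periodic.eq_of_gradient_flow (fun _ => hGpd.inner_toEuclideanLin_pos)
    (hF.differentiable one_ne_zero) hx hflow hper hT

/-- Gradient flow with a constant symmetric positive definite metric `G`
admits no nonconstant periodic orbits: any periodic solution of
`x' = G ∇F(x)` is constant. -/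
theorem stmt8 (n : ℕ) (G : Matrix (Fin n) (Fin n) ℝ)
    (hGsymm : G.IsSymm) (hGpd : G.PosDef)
    (F : EuclideanSpace ℝ (Fin n) → ℝ) (hF : ContDiff ℝ 1 F)
    (x : ℝ → EuclideanSpace ℝ (Fin n)) (hx : Differentiable ℝ x)
    (hflow : ∀ t : ℝ, deriv x t = Matrix.toEuclideanLin G (gradient F (x t)))
    (T : ℝ) (hT : 0 < T) (hper : ∀ t : ℝ, x (t + T) = x t) :
    ∀ t₁ t₂ : ℝ, x t₁ = x t₂ :=
  stmt8_general n G hGpd F hF x hx hflow T hT hper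
end

section
/- For all real numbers M and N with N ≠ 0, the determinant of the symmetric 4×4 matrix G(M,N) defined below equals (1/4)·(M−1)²·(M+2)²·(N−3)·(N−2)²·(N+1)²·(N+4)²·(N+6). -/
/-- The metric `G(M,N)` on the space of the four quartic couplings. -/
noncomputable def Gmat (M N : ℝ) : Matrix (Fin 4) (Fin 4) ℝ :=
  let G11 := (M*N^4 + 3*M*N^3 + 2*N^3 - 2*M*N^2 - 4*N^2 - 12*M*N - 24*N + 24*M + 48) / (2*N^2)
  let G12 := (N^4 + M*N^3 + 4*N^3 - 2*M*N^2 - 4*N^2 - 12*M*N - 24*N + 24*M + 48) / (2*N^2)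
  let G13 := 2 * (M*N^2 + N^2 + M*N + 2*N - 2*M - 4) / N
  let G14 := 2 * (2*N^2 + M*N + 2*N - 2*M - 4) / N
  let G22 := (M*N^4 + N^4 + 4*M*N^3 + 6*N^3 - 4*M*N^2 - 8*N^2 - 24*M*N - 48*N + 48*M + 96) / (4*N^2)
  let G23 := (M*N^2 + 3*N^2 + 2*M*N + 4*N - 4*M - 8) / N
  let G24 := 2 * (M*N^2 + N^2 + M*N + 2*N - 2*M - 4) / N
  let G33 := (M*N^3 + N^3 + M*N^2 + N^2 + 4*N) / N
  let G34 := 2 * (N^2 + N + 2*M)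
  let G44 := 2 * (4 - 2*M + M*N + M*N^2)
  !![G11, G12, G13, G14;
     G12, G22, G23, G24;
     G13, G23, G33, G34;
     G14, G24, G34, G44]

/-! Scaling the first two coordinates by `N` clears every denominator of `G(M,N)`; the
determinant of the resulting polynomial matrix is `N⁴` times the claimed product, which the
factor `det (diagonal ![N⁻¹, N⁻¹, 1, 1])² = N⁻⁴` cancels. -/

open Matrix

theorem Matrix.det_fin_four_of {R : Type*} [CommRing R] (a b c d e f g h i j k l m n o p : R) :
    det !![a, b, c, d; e, f, g, h; i, j, k, l; m, n, o, p] =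
      a * (f * (k * p - l * o) - g * (j * p - l * n) + h * (j * o - k * n))
      - b * (e * (k * p - l * o) - g * (i * p - l * m) + h * (i * o - k * m))
      + c * (e * (j * p - l * n) - f * (i * p - l * m) + h * (i * n - j * m))
      - d * (e * (j * o - k * n) - f * (i * o - k * m) + g * (i * n - j * m)) := by
  rw [det_succ_row_zero, Fin.sum_univ_four]
  simp only [det_fin_three, submatrix_apply, of_apply, cons_val', cons_val_fin_one, cons_val,
    Fin.succAbove, Fin.isValue, Fin.reduceSucc, Fin.reduceCastSucc, Fin.reduceLT,
    Fin.coe_ofNat_eq_mod, ite_true, ite_false]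
  ring

noncomputable def clearedGmat (M N : ℝ) : Matrix (Fin 4) (Fin 4) ℝ :=
  !![(M*N^4 + 3*M*N^3 + 2*N^3 - 2*M*N^2 - 4*N^2 - 12*M*N - 24*N + 24*M + 48) / 2,
     (N^4 + M*N^3 + 4*N^3 - 2*M*N^2 - 4*N^2 - 12*M*N - 24*N + 24*M + 48) / 2,
     2 * (M*N^2 + N^2 + M*N + 2*N - 2*M - 4),
     2 * (2*N^2 + M*N + 2*N - 2*M - 4);
     (N^4 + M*N^3 + 4*N^3 - 2*M*N^2 - 4*N^2 - 12*M*N - 24*N + 24*M + 48) / 2,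
     (M*N^4 + N^4 + 4*M*N^3 + 6*N^3 - 4*M*N^2 - 8*N^2 - 24*M*N - 48*N + 48*M + 96) / 4,
     M*N^2 + 3*N^2 + 2*M*N + 4*N - 4*M - 8,
     2 * (M*N^2 + N^2 + M*N + 2*N - 2*M - 4);
     2 * (M*N^2 + N^2 + M*N + 2*N - 2*M - 4),
     M*N^2 + 3*N^2 + 2*M*N + 4*N - 4*M - 8,
     M*N^2 + N^2 + M*N + N + 4,
     2 * (N^2 + N + 2*M);
     2 * (2*N^2 + M*N + 2*N - 2*M - 4),
     2 * (M*N^2 + N^2 + M*N + 2*N - 2*M - 4),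
     2 * (N^2 + N + 2*M),
     2 * (4 - 2*M + M*N + M*N^2)]

theorem Gmat_eq_diagonal_mul_clearedGmat_mul_diagonal {M N : ℝ} (hN : N ≠ 0) :
    Gmat M N = diagonal ![N⁻¹, N⁻¹, 1, 1] * clearedGmat M N * diagonal ![N⁻¹, N⁻¹, 1, 1] := by
  ext i j
  fin_cases i <;> fin_cases j <;>
    simp [Gmat, clearedGmat] <;> field_simp

theorem det_clearedGmat (M N : ℝ) :
    (clearedGmat M N).det = N^4 * ((1/4) * (M - 1)^2 * (M + 2)^2 * (N - 3) * (N - 2)^2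
      * (N + 1)^2 * (N + 4)^2 * (N + 6)) := by
  rw [clearedGmat, det_fin_four_of]
  ring

/-- The determinant of the metric `G(M,N)` equals
`(1/4)(M−1)²(M+2)²(N−3)(N−2)²(N+1)²(N+4)²(N+6)`. -/
theorem stmt10 (M N : ℝ) (hN : N ≠ 0) :
    (Gmat M N).det =
      (1/4) * (M - 1)^2 * (M + 2)^2 * (N - 3) * (N - 2)^2 * (N + 1)^2
        * (N + 4)^2 * (N + 6) := by
  rw [Gmat_eq_diagonal_mul_clearedGmat_mul_diagonal hN, det_mul, det_mul, det_diagonal,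
    det_clearedGmat, Fin.prod_univ_four]
  simp only [cons_val_zero, cons_val_one, cons_val]
  field_simp
end

section
/- Let M and N be real numbers with −6 < N < 3, N ∉ {−4, −1, 0, 2}, and M ∉ {1, −2}. Then det G(M,N) < 0, and consequently the real symmetric matrix G(M,N) is indefinite: there exist vectors u, v ∈ ℝ⁴ with uᵀ G(M,N) u > 0 and vᵀ G(M,N) v < 0. -/
open Matrix

namespace Matrix

variable {n : Type*} [Fintype n] [DecidableEq n] {A : Matrix n n ℝ}

theorem exists_dotProduct_mulVec_neg_of_det_neg (hA : A.IsHermitian) (hdet : A.det < 0) :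
    ∃ v : n → ℝ, v ⬝ᵥ (A *ᵥ v) < 0 := by
  by_contra! h
  have hpsd : A.PosSemidef := .of_dotProduct_mulVec_nonneg hA fun x => by simpa using h x
  exact hdet.not_ge hpsd.det_nonneg

theorem exists_dotProduct_mulVec_pos_of_det_neg (hn : Even (Fintype.card n))
    (hA : A.IsHermitian) (hdet : A.det < 0) : ∃ u : n → ℝ, 0 < u ⬝ᵥ (A *ᵥ u) := by
  have hdet' : (-A).det < 0 := by rwa [det_neg, hn.neg_one_pow, one_mul]
  obtain ⟨u, hu⟩ := exists_dotProduct_mulVec_neg_of_det_neg hA.neg hdet'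
  exact ⟨u, by simpa [neg_mulVec] using hu⟩

end Matrix

theorem Gmat_isHermitian (M N : ℝ) : (Gmat M N).IsHermitian := by
  ext i j
  fin_cases i <;> fin_cases j <;> simp [Gmat, conjTranspose_apply]

theorem Gmat_det (M N : ℝ) (hN : N ≠ 0) :
    (Gmat M N).det =
      (M - 1)^2 * (M + 2)^2 * (N - 2)^2 * (N + 1)^2 * (N + 4)^2 * (N - 3) * (N + 6) / 4 := by
  simp only [Gmat, det_succ_row_zero, Nat.succ_eq_add_one, Nat.reduceAdd, Fin.isValue, of_apply,
    cons_val', cons_val_fin_one, cons_val_zero, submatrix_apply, Fin.succ_zero_eq_one, Fin.succAbove,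
    cons_val_one, submatrix_submatrix, Function.comp_apply, Fin.succ_one_eq_two, cons_val, det_unique,
    Fin.default_eq_zero, Fin.reduceSucc, Fin.castSucc_zero, Fin.sum_univ_succ, Fin.coe_ofNat_eq_mod,
    Nat.zero_mod, pow_zero, one_mul, lt_self_iff_false, ↓reduceIte, Fin.castSucc_one,
    Finset.univ_unique, Fin.val_succ, Fin.val_eq_zero, zero_add, pow_one, Fin.castSucc_succ, neg_mul,
    Fin.succ_pos, Finset.sum_neg_distrib, Finset.sum_singleton, not_lt_zero, Fin.reduceCastSucc,
    even_two, Even.neg_pow, one_pow, Fin.reduceLT, cons_val_succ, Fin.lt_one_iff, Fin.reduceEq]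
  field_simp
  ring

theorem Gmat_det_neg (M N : ℝ) (hN₁ : -6 < N) (hN₂ : N < 3)
    (hN₃ : N ≠ -4) (hN₄ : N ≠ -1) (hN₅ : N ≠ 0) (hN₆ : N ≠ 2)
    (hM₁ : M ≠ 1) (hM₂ : M ≠ -2) : (Gmat M N).det < 0 := by
  have hM₁' : M - 1 ≠ 0 := sub_ne_zero.mpr hM₁
  have hM₂' : M + 2 ≠ 0 := by contrapose! hM₂; linarith
  have hN₆' : N - 2 ≠ 0 := sub_ne_zero.mpr hN₆
  have hN₄' : N + 1 ≠ 0 := by contrapose! hN₄; linarith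
  have hN₃' : N + 4 ≠ 0 := by contrapose! hN₃; linarith
  have hsquares : 0 < (M - 1)^2 * (M + 2)^2 * (N - 2)^2 * (N + 1)^2 * (N + 4)^2 := by positivity
  have hends : (N - 3) * (N + 6) < 0 := mul_neg_of_neg_of_pos (by linarith) (by linarith)
  rw [Gmat_det M N hN₅]
  linarith [mul_neg_of_pos_of_neg hsquares hends]

/-- For `−6 < N < 3` with `N ∉ {−4, −1, 0, 2}` and `M ∉ {1, −2}`, the metric
`G(M,N)` has negative determinant, so it is indefinite: its quadratic form
takes both positive and negative values. -/
theorem stmt11 (M N : ℝ) (hN₁ : -6 < N) (hN₂ : N < 3)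
    (hN₃ : N ≠ -4) (hN₄ : N ≠ -1) (hN₅ : N ≠ 0) (hN₆ : N ≠ 2)
    (hM₁ : M ≠ 1) (hM₂ : M ≠ -2) :
    (Gmat M N).det < 0 ∧
      ∃ u v : Fin 4 → ℝ,
        0 < u ⬝ᵥ ((Gmat M N) *ᵥ u) ∧ v ⬝ᵥ ((Gmat M N) *ᵥ v) < 0 := by
  have hdet := Gmat_det_neg M N hN₁ hN₂ hN₃ hN₄ hN₅ hN₆ hM₁ hM₂
  obtain ⟨u, hu⟩ := exists_dotProduct_mulVec_pos_of_det_neg (by decide) (Gmat_isHermitian M N) hdet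
  obtain ⟨v, hv⟩ := exists_dotProduct_mulVec_neg_of_det_neg (Gmat_isHermitian M N) hdet
  exact ⟨hdet, u, v, hu, hv⟩
end

section
/- For every real 3×3 matrix X with tr(X) = 0, one has tr(X⁴) = (1/2)·(tr(X²))². This is the linear relation among the quartic trace invariants that holds at N = 3 and causes the degeneration of the space of quartic operators. -/
/-- For every traceless real 3×3 matrix `X`, `tr(X⁴) = (1/2)(tr(X²))²` —
the linear relation among the quartic trace invariants at `N = 3`. -/
theorem stmt17 (X : Matrix (Fin 3) (Fin 3) ℝ) (hX : X.trace = 0) :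
    (X ^ 4).trace = (1 / 2) * ((X ^ 2).trace) ^ 2 := by
  simp only [Matrix.trace, Matrix.diag, Fin.sum_univ_three, pow_succ, pow_zero,
    Matrix.one_mul, Matrix.mul_apply, add_zero] at hX ⊢
  linear_combination ((1/2) * X 2 2 ^ 3 + (2) * X 1 2 * X 2 1 * X 2 2 + (-1/2) * X 1 1 * X 2 2 ^ 2 + (2) * X 1 1 * X 1 2 * X 2 1 + (-1/2) * X 1 1 ^ 2 * X 2 2 + (1/2) * X 1 1 ^ 3 + (2) * X 0 2 * X 2 0 * X 2 2 + (-2) * X 0 2 * X 1 1 * X 2 0 + (4) * X 0 2 * X 1 0 * X 2 1 + (4) * X 0 1 * X 1 2 * X 2 0 + (-2) * X 0 1 * X 1 0 * X 2 2 + (2) * X 0 1 * X 1 0 * X 1 1 + (-1/2) * X 0 0 * X 2 2 ^ 2 + (-2) * X 0 0 * X 1 2 * X 2 1 + (1) * X 0 0 * X 1 1 * X 2 2 + (-1/2) * X 0 0 * X 1 1 ^ 2 + (2) * X 0 0 * X 0 2 * X 2 0 + (2) * X 0 0 * X 0 1 * X 1 0 + (-1/2) * X 0 0 ^ 2 * X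 2 2 + (-1/2) * X 0 0 ^ 2 * X 1 1 + (1/2) * X 0 0 ^ 3) * hX
end

section
/- For all real 3×3 matrices A and B with tr(A) = 0 and tr(B) = 0, one has 2·tr(A²B²) + tr(ABAB) = (1/2)·tr(A²)·tr(B²) + (tr(AB))². This is the polarized form of the linear relation among the quartic trace invariants that holds at N = 3. -/
/-- For all traceless real 3×3 matrices `A` and `B`,
`2·tr(A²B²) + tr(ABAB) = (1/2)·tr(A²)·tr(B²) + (tr(AB))²` — the polarized
form of the linear relation among the quartic trace invariants at `N = 3`. -/
theorem stmt18 (A B : Matrix (Fin 3) (Fin 3) ℝ)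
    (hA : A.trace = 0) (hB : B.trace = 0) :
    2 * (A ^ 2 * B ^ 2).trace + (A * B * A * B).trace
      = (1 / 2) * (A ^ 2).trace * (B ^ 2).trace + ((A * B).trace) ^ 2 := by
  simp only [Matrix.trace, Matrix.diag, Matrix.mul_apply, pow_two,
    Fin.sum_univ_three] at *
  have h1 : A 2 2 = -(A 0 0 + A 1 1) := by linarith
  have h2 : B 2 2 = -(B 0 0 + B 1 1) := by linarith
  rw [h1, h2]; ring
end
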